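/- For any hypothesis h and distributions Q, P over X, the error of h on Q is bounded by λ'' + ε_P(h) + (1/2) d_{HΔH}(Q, P), where λ'' is the error of an ideal joint hypothesis minimizing the sum of errors on P and Q. -/

import Mathlib

/-!
Let `h'` be any hypothesis of `H`. On `Q`, the disagreement probability between two labelings is
a pseudometric, so `ε_Q(h) ≤ ε_Q(h') + Q[h ≠ h']`. The set `{h ≠ h'}` is one of the sets over
which `d_{HΔH}` takes its supremum, so `Q[h ≠ h'] ≤ P[h ≠ h'] + d_{HΔH}(Q, P) / 2`, and by the
triangle inequality on `P` again `P[h ≠ h'] ≤ ε_P(h) + ε_P(h')`. Adding up gives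
`ε_Q(h) ≤ (ε_P(h') + ε_Q(h')) + ε_P(h) + d_{HΔH}(Q, P) / 2`; take the infimum over `h'`.
-/

open MeasureTheory

/-- Error of a binary hypothesis `h` on a distribution `D` over `X` with
labeling function `f`. -/
noncomputable def err {X : Type*} [MeasurableSpace X] (D : Measure X)
    (f h : X → Bool) : ℝ :=
  (D {x | h x ≠ f x}).toReal

/-- The `HΔH`-divergence between two distributions `P` and `Q` over `X`. -/
noncomputable def dHDH {X : Type*} [MeasurableSpace X] (H : Set (X → Bool))
    (P Q : Measure X) : ℝ :=
  2 * sSup {r : ℝ | ∃ h ∈ H, ∃ h' ∈ H,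
    r = |(P {x | h x ≠ h' x}).toReal - (Q {x | h x ≠ h' x}).toReal|}

/-- The error of the ideal joint hypothesis for distributions `P` and `Q`
(with labeling functions `fP`, `fQ`): the infimum over `H` of the sum of the
errors on the two domains. -/
noncomputable def idealJointError {X : Type*} [MeasurableSpace X]
    (H : Set (X → Bool)) (P Q : Measure X) (fP fQ : X → Bool) : ℝ :=
  sInf {r : ℝ | ∃ h ∈ H, r = err P fP h + err Q fQ h}

section Disagreement

variable {X : Type*} [MeasurableSpace X]

noncomputable def disagreement (D : Measure X) (g g' : X → Bool) : ℝ :=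
  D.real {x | g x ≠ g' x}

theorem err_eq_disagreement (D : Measure X) (f h : X → Bool) :
    err D f h = disagreement D h f :=
  rfl

theorem disagreement_comm (D : Measure X) (g g' : X → Bool) :
    disagreement D g g' = disagreement D g' g := by
  simp only [disagreement, ne_comm]

theorem disagreement_triangle (D : Measure X) [IsFiniteMeasure D] (g k l : X → Bool) :
    disagreement D g l ≤ disagreement D g k + disagreement D k l := by
  have hsub : {x | g x ≠ l x} ⊆ {x | g x ≠ k x} ∪ {x | k x ≠ l x} := by
    intro x hx
    by_contra hx'
    simp_all
  exact (measureReal_mono hsub).trans (measureReal_union_le _ _)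

theorem abs_disagreement_sub_le_dHDH {H : Set (X → Bool)} (P Q : Measure X)
    [IsFiniteMeasure P] [IsFiniteMeasure Q] {g g' : X → Bool} (hg : g ∈ H) (hg' : g' ∈ H) :
    |disagreement P g g' - disagreement Q g g'| ≤ dHDH H P Q / 2 := by
  have hbdd : BddAbove {r : ℝ | ∃ h ∈ H, ∃ h' ∈ H,
      r = |(P {x | h x ≠ h' x}).toReal - (Q {x | h x ≠ h' x}).toReal|} := by
    refine ⟨P.real Set.univ + Q.real Set.univ, ?_⟩
    rintro _ ⟨h, -, h', -, rfl⟩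
    have hP : P.real {x | h x ≠ h' x} ≤ P.real Set.univ := measureReal_mono (Set.subset_univ _)
    have hQ : Q.real {x | h x ≠ h' x} ≤ Q.real Set.univ := measureReal_mono (Set.subset_univ _)
    rw [← measureReal_def, ← measureReal_def, abs_sub_le_iff]
    constructor <;> linarith [measureReal_nonneg (μ := P) (s := {x | h x ≠ h' x}),
      measureReal_nonneg (μ := Q) (s := {x | h x ≠ h' x})]
  rw [dHDH, mul_div_cancel_left₀ _ two_ne_zero]
  exact le_csSup hbdd ⟨g, hg, g', hg', rfl⟩

end Disagreement

/-- Single-source domain adaptation bound (Ben-David et al.): for any `h ∈ H`,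
`ε_Q(h) ≤ λ'' + ε_P(h) + (1/2) d_{HΔH}(Q, P)`. -/
theorem single_source_da_bound {X : Type*} [MeasurableSpace X]
    (H : Set (X → Bool)) (P Q : Measure X)
    [IsProbabilityMeasure P] [IsProbabilityMeasure Q]
    (fP fQ : X → Bool) :
    ∀ h ∈ H, err Q fQ h ≤
      idealJointError H P Q fP fQ + err P fP h + (1 / 2) * dHDH H Q P := by
  intro h hh
  suffices hbound : ∀ h' ∈ H,
      err Q fQ h - err P fP h - dHDH H Q P / 2 ≤ err P fP h' + err Q fQ h' by
    have hinf : err Q fQ h - err P fP h - dHDH H Q P / 2 ≤ idealJointError H P Q fP fQ :=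
      le_csInf ⟨_, h, hh, rfl⟩ (by rintro _ ⟨h', hh', rfl⟩; exact hbound h' hh')
    linarith
  intro h' hh'
  have hQ := disagreement_triangle Q h h' fQ
  have hP := disagreement_triangle P h fP h'
  have hdiv := abs_disagreement_sub_le_dHDH Q P hh hh'
  rw [disagreement_comm P fP h'] at hP
  simp only [err_eq_disagreement]
  linarith [le_abs_self (disagreement Q h h' - disagreement P h h')]
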